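/- Let a be an indeterminate. The element exp((a/2) z_{1/2}²) := Σ_{n≥0} (a/2)^n z_{1/2}^{2n}/n! lies in the degree completion of R (tensored with ℚ[[a]]); applying Γ(t) componentwise and taking the constant term gives ⟨0| Γ(t) exp((a/2) φ_{1/2}²) |0⟩ = (1 − a t_1)^{−1/2}, i.e. the constant term of Γ(t)(exp((a/2) z_{1/2}²)) equals Σ_{n≥0} binom(2n, n) (a t_1)^n / 4^n as a formal power series in a and t. In particular it depends only on t_1. -/

import Mathlib

open MvPolynomial

/-- The free boson `φ_{k+1/2}` acting on `R = ℚ[z_{1/2}, z_{3/2}, …]`, where the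
variable `z_{m+1/2}` is encoded as `X m`.  For `k ≥ 0` it is multiplication by
`z_{k+1/2}`; for `k < 0` it is `(-1)^{-j-1/2} ∂/∂z_{-j}` (with `j = k + 1/2`),
i.e. `(-1)^{k+1} ∂/∂z_{-k-1/2}`. -/
noncomputable def phiOp (k : ℤ) : MvPolynomial ℕ ℚ →ₗ[ℚ] MvPolynomial ℕ ℚ :=
  if 0 ≤ k then LinearMap.mulLeft ℚ (X k.toNat)
  else ((-1 : ℚ) ^ (k + 1)) •
    (pderiv (R := ℚ) (σ := ℕ) (-k - 1).toNat).toLinearMap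

/-- `J_n = (1/2) Σ_{j ∈ 1/2+ℤ} (-1)^{j+1/2} φ_j ∘ φ_{-j-n}` in integer-shifted
indices: the half-integer `j = k + 1/2` corresponds to `k : ℤ`, so
`(-1)^{j+1/2} = (-1)^{k+1}` and `φ_{-j-n}` has shifted index `-k-n-1`.
On each polynomial only finitely many summands act nonzero. -/
noncomputable def Jop (n : ℤ) (p : MvPolynomial ℕ ℚ) : MvPolynomial ℕ ℚ :=
  (1/2 : ℚ) • ∑ᶠ k : ℤ, ((-1 : ℚ) ^ (k + 1)) • phiOp k (phiOp (-k - n - 1) p)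

/-- Apply a finite composition `J_{n_1} ∘ J_{n_2} ∘ ⋯ ∘ J_{n_r}` (given by a
list `[n_1, …, n_r]`) to a polynomial. -/
noncomputable def applyJ (l : List ℤ) (p : MvPolynomial ℕ ℚ) : MvPolynomial ℕ ℚ :=
  l.foldr (fun n q => Jop n q) p

/-- The list of entries of a finitely supported multiplicity function
`a : ℕ →₀ ℕ`, each `n` repeated `a n` times (in increasing order). -/
noncomputable def expList (a : ℕ →₀ ℕ) : List ℕ :=
  (Finsupp.toMultiset a).sort (· ≤ ·)

/-- The constant term of `Γ(t)(q)`, `Γ(t) = exp(Σ_{n≥1 odd} t_n J_n)`, as a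
polynomial in the times `t = (t_1, t_3, t_5, …)` (the variable `X n`
represents `t_n`).  Expanding the exponential (the `J_n`, `n > 0` odd,
commute), the coefficient of `t^a` is `(∏_n (a n)!)⁻¹ ⟨0| ∏_n J_n^{a n} q⟩`. -/
noncomputable def constTermGamma (q : MvPolynomial ℕ ℚ) : MvPolynomial ℕ ℚ :=
  ∑ᶠ (a : ℕ →₀ ℕ) (_ : ∀ n ∈ a.support, Odd n),
    MvPolynomial.monomial a
      (MvPolynomial.coeff 0 (applyJ ((expList a).map fun n => (n : ℤ)) q)
        / ∏ n ∈ a.support, ((a n).factorial : ℚ))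

/-!
On polynomials in `z_{1/2}` alone, every summand of `J_n` (`n ≥ 1`) vanishes except, for `n = 1`,
the term `φ_{-1/2} φ_{-1/2}`; so `J_1` acts as `(1/2) ∂²/∂z_{1/2}²` and `J_n = 0` for `n ≥ 2`.
Hence a word in the `J_n` kills `z_{1/2}^{2n}` unless it is `J_1^k`, which sends it to
`(2n)!/((2n-2k)! 2^k) z_{1/2}^{2n-2k}`; only `k = n` leaves a constant term. So the only monomial
of `Γ(t)` that contributes is `t_1^n`, with coefficient `(2n)!/(2^n n!)`, and dividing by
`2^n n!` gives `binom(2n, n)/4^n`.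
-/

lemma phiOp_of_nonneg {k : ℤ} (hk : 0 ≤ k) (p : MvPolynomial ℕ ℚ) :
    phiOp k p = X k.toNat * p := by
  rw [phiOp, if_pos hk]; rfl

lemma phiOp_of_neg {k : ℤ} (hk : k < 0) (p : MvPolynomial ℕ ℚ) :
    phiOp k p = ((-1 : ℚ) ^ (k + 1)) • pderiv (-k - 1).toNat p := by
  rw [phiOp, if_neg (not_le.2 hk)]; rfl

lemma Jop_smul (n : ℤ) (c : ℚ) (p : MvPolynomial ℕ ℚ) : Jop n (c • p) = c • Jop n p := by
  simp only [Jop, map_smul, smul_finsum, smul_comm c]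

lemma Jop_zero (n : ℤ) : Jop n 0 = 0 := by
  simpa using Jop_smul n 0 0

section pderiv

variable {R σ : Type*} [CommSemiring R]

lemma pderiv_X_pow_of_ne {i j : σ} (h : i ≠ j) (m : ℕ) :
    pderiv i ((X j : MvPolynomial σ R) ^ m) = 0 := by
  rw [pderiv_pow, pderiv_X_of_ne h.symm, mul_zero]

lemma pderiv_X_pow_self (i : σ) (m : ℕ) :
    pderiv i ((X i : MvPolynomial σ R) ^ m) = (m : R) • X i ^ (m - 1) := by
  rw [pderiv_pow, pderiv_X_self, mul_one, smul_eq_C_mul, map_natCast]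

end pderiv

lemma phiOp_phiOp_X_zero_pow {n k : ℤ} (hn : 1 ≤ n) (hk : n = 1 → k ≠ -1) (m : ℕ) :
    phiOp k (phiOp (-k - n - 1) ((X 0 : MvPolynomial ℕ ℚ) ^ m)) = 0 := by
  rcases le_or_gt 0 (-k - n - 1) with hj | hj
  · rw [phiOp_of_nonneg hj, phiOp_of_neg (by omega), pderiv_mul,
      pderiv_X_of_ne (by omega), pderiv_X_pow_of_ne (by omega)]
    simp
  · rw [phiOp_of_neg hj, show -(-k - n - 1) - 1 = k + n by ring]
    by_cases hkn : k + n = 0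
    · rw [hkn, Int.toNat_zero, pderiv_X_pow_self, phiOp_of_neg (by omega), Derivation.map_smul,
        Derivation.map_smul, pderiv_X_pow_of_ne (show (-k - 1).toNat ≠ 0 by omega)]
      simp
    · simp [pderiv_X_pow_of_ne (show (k + n).toNat ≠ 0 by omega)]

lemma Jop_X_zero_pow_of_two_le {n : ℤ} (hn : 2 ≤ n) (m : ℕ) :
    Jop n ((X 0 : MvPolynomial ℕ ℚ) ^ m) = 0 := by
  rw [Jop, finsum_eq_zero_of_forall_eq_zero fun k => by
    rw [phiOp_phiOp_X_zero_pow (by omega) (by omega), smul_zero], smul_zero]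

lemma Jop_one_X_zero_pow (m : ℕ) :
    Jop 1 ((X 0 : MvPolynomial ℕ ℚ) ^ m) = ((m.descFactorial 2 : ℚ) / 2) • X 0 ^ (m - 2) := by
  have hsingle : ∀ k ≠ -1, ((-1 : ℚ) ^ (k + 1)) •
      phiOp k (phiOp (-k - 1 - 1) ((X 0 : MvPolynomial ℕ ℚ) ^ m)) = 0 := fun k hk => by
    rw [phiOp_phiOp_X_zero_pow le_rfl (fun _ => hk), smul_zero]
  rw [Jop, finsum_eq_single _ (-1) hsingle, show -(-1 : ℤ) - 1 - 1 = -1 by norm_num,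
    phiOp_of_neg (by norm_num), phiOp_of_neg (by norm_num)]
  simp only [show (-1 : ℤ) + 1 = 0 by norm_num, show (-(-1 : ℤ) - 1).toNat = 0 by norm_num,
    zpow_zero, pderiv_X_pow_self, Derivation.map_smul, smul_smul, Nat.sub_sub, Nat.sub_zero,
    Nat.descFactorial_succ, Nat.descFactorial_zero, mul_one]
  congr 1
  push_cast
  ring

lemma applyJ_cons (n : ℤ) (l : List ℤ) (p : MvPolynomial ℕ ℚ) :
    applyJ (n :: l) p = Jop n (applyJ l p) := rfl

lemma applyJ_replicate_one_X_zero_pow (k m : ℕ) :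
    applyJ (List.replicate k 1) ((X 0 : MvPolynomial ℕ ℚ) ^ m)
      = ((m.descFactorial (2 * k) : ℚ) / 2 ^ k) • X 0 ^ (m - 2 * k) := by
  induction k with
  | zero => simp [applyJ]
  | succ k ih =>
    rw [List.replicate_succ, applyJ_cons, ih, Jop_smul, Jop_one_X_zero_pow, smul_smul,
      Nat.sub_sub, ← Nat.descFactorial_mul_descFactorial (show 2 * k ≤ 2 * (k + 1) by omega)]
    congr 1
    rw [show 2 * (k + 1) - 2 * k = 2 by omega]
    push_cast
    ring

lemma applyJ_X_zero_pow_eq_zero {l : List ℤ} (hpos : ∀ x ∈ l, 1 ≤ x) (hbig : ∃ x ∈ l, 2 ≤ x)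
    (m : ℕ) : applyJ l ((X 0 : MvPolynomial ℕ ℚ) ^ m) = 0 := by
  induction l with
  | nil => simp at hbig
  | cons a l ih =>
    rw [applyJ_cons]
    by_cases hl : ∃ x ∈ l, 2 ≤ x
    · rw [ih (fun x hx => hpos x (List.mem_cons_of_mem a hx)) hl, Jop_zero]
    · obtain ⟨x, hx, hx2⟩ := hbig
      have hxa : x = a := (List.mem_cons.1 hx).resolve_right fun hx => hl ⟨x, hx, hx2⟩
      simp only [not_exists, not_and, not_le] at hl
      have hones : l = List.replicate l.length 1 := List.eq_replicate_of_mem fun x hx => by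
        have := hpos x (List.mem_cons_of_mem a hx)
        have := hl x hx
        omega
      rw [hones, applyJ_replicate_one_X_zero_pow, Jop_smul, Jop_X_zero_pow_of_two_le (hxa ▸ hx2),
        smul_zero]

lemma coeff_zero_applyJ_X_zero_pow {l : List ℤ} (hpos : ∀ x ∈ l, 1 ≤ x) (n : ℕ) :
    coeff 0 (applyJ l ((X 0 : MvPolynomial ℕ ℚ) ^ (2 * n)))
      = if l = List.replicate n 1 then ((2 * n).factorial : ℚ) / 2 ^ n else 0 := by
  by_cases hbig : ∃ x ∈ l, 2 ≤ x
  · rw [applyJ_X_zero_pow_eq_zero hpos hbig, coeff_zero, if_neg]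
    rintro rfl
    obtain ⟨x, hx, h⟩ := hbig
    rw [List.eq_of_mem_replicate hx] at h
    norm_num at h
  simp only [not_exists, not_and, not_le] at hbig
  obtain ⟨k, rfl⟩ : ∃ k, l = List.replicate k 1 := ⟨l.length, List.eq_replicate_of_mem
    fun x hx => by have := hpos x hx; have := hbig x hx; omega⟩
  rw [applyJ_replicate_one_X_zero_pow, coeff_smul, coeff_X_pow]
  simp only [List.replicate_left_inj]
  rcases lt_trichotomy k n with hlt | rfl | hgt
  · rw [if_neg (Finsupp.single_ne_zero.2 (by omega)), if_neg hlt.ne, smul_zero]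
  · simp [Nat.descFactorial_self]
  · simp [hgt.ne', Nat.descFactorial_eq_zero_iff_lt.2 (show 2 * n < 2 * k by omega)]

lemma expList_eq_replicate_iff {a : ℕ →₀ ℕ} {i n : ℕ} :
    expList a = List.replicate n i ↔ a = Finsupp.single i n := by
  rw [List.eq_replicate_iff, expList, Multiset.length_sort]
  simp only [Multiset.mem_sort]
  rw [← Multiset.eq_replicate, ← Multiset.nsmul_singleton, ← Finsupp.toMultiset_single,
    Finsupp.toMultiset_eq_iff, Finsupp.toMultiset_toFinsupp]

/- The cast in `(expList a).map fun n => (n : ℤ)` (as written in `constTermGamma`) elaborates as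
the monadic lift `do let a ← expList a; pure ↑a` followed by `map id`. -/
lemma map_coe_eq_map_natCast (l : List ℕ) : (l.map fun n => (n : ℤ)) = l.map ((↑) : ℕ → ℤ) :=
  (List.map_id _).trans (List.flatMap_pure_eq_map _ l)

lemma constTermGamma_X_zero_pow (n : ℕ) :
    constTermGamma ((X 0 : MvPolynomial ℕ ℚ) ^ (2 * n))
      = (((2 * n).factorial : ℚ) / 2 ^ n / n.factorial) • X 1 ^ n := by
  have hpos (a : ℕ →₀ ℕ) (hodd : ∀ i ∈ a.support, Odd i) :
      ∀ x ∈ (expList a).map ((↑) : ℕ → ℤ), 1 ≤ x := by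
    intro x hx
    obtain ⟨i, hi, rfl⟩ := List.mem_map.1 hx
    rw [expList, Multiset.mem_sort, Finsupp.mem_toMultiset] at hi
    exact_mod_cast (hodd i hi).pos
  have hones (a : ℕ →₀ ℕ) :
      (expList a).map ((↑) : ℕ → ℤ) = List.replicate n 1 ↔ a = Finsupp.single 1 n := by
    rw [← expList_eq_replicate_iff, show List.replicate n (1 : ℤ) = (List.replicate n 1).map
      ((↑) : ℕ → ℤ) by rw [List.map_replicate, Nat.cast_one],
      (List.map_injective_iff.2 Nat.cast_injective).eq_iff]
  have hodd : ∀ i ∈ (Finsupp.single 1 n).support, Odd i := fun i hi => by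
    rw [Finset.mem_singleton.1 (Finsupp.support_single_subset hi)]
    exact odd_one
  have hprod : ∏ i ∈ (Finsupp.single 1 n).support, ((Finsupp.single 1 n i).factorial : ℚ)
      = n.factorial := Finsupp.prod_single_index (h := fun _ (k : ℕ) => (k.factorial : ℚ)) (by simp)
  simp only [constTermGamma, map_coe_eq_map_natCast]
  rw [finsum_eq_single _ (Finsupp.single 1 n), finsum_eq_if, if_pos hodd,
    coeff_zero_applyJ_X_zero_pow (hpos _ hodd), if_pos ((hones _).2 rfl), hprod,
    X_pow_eq_monomial, smul_monomial, smul_eq_mul, mul_one]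
  intro a ha
  rw [finsum_eq_if]
  split_ifs with hodd
  · rw [coeff_zero_applyJ_X_zero_pow (hpos a hodd), if_neg (mt (hones a).1 ha), zero_div, map_zero]
  · rfl

/-- Coefficient-of-`a^n` form of:
`⟨0| Γ(t) exp((a/2) φ_{1/2}²) |0⟩ = (1 - a t_1)^{-1/2}
  = Σ_{n≥0} binom(2n,n) (a t_1)^n / 4^n`
as a formal power series in `a` and `t`.  Here
`exp((a/2) z_{1/2}²) = Σ_n a^n z_{1/2}^{2n}/(2^n n!)` lies in the degree
completion of `R`, `Γ(t)` is applied componentwise, and the coefficient of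
`a^n` of the constant term, namely `(2^n n!)⁻¹ ⟨0|Γ(t) z_{1/2}^{2n}|0⟩`,
equals `binom(2n,n) t_1^n / 4^n`.  In particular it depends only on `t_1`. -/
theorem tau_gaussian_coefficients (n : ℕ) :
    ((2 : ℚ) ^ n * (n.factorial : ℚ))⁻¹ •
        constTermGamma ((X 0 : MvPolynomial ℕ ℚ) ^ (2 * n))
      = (((2 * n).choose n : ℚ) / 4 ^ n) • (X 1 : MvPolynomial ℕ ℚ) ^ n := by
  rw [constTermGamma_X_zero_pow, smul_smul, Nat.cast_choose ℚ (by omega : n ≤ 2 * n),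
    show 2 * n - n = n by omega, show (4 : ℚ) ^ n = 2 ^ n * 2 ^ n by rw [← mul_pow]; norm_num]
  congr 1
  field_simp
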